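/- Let λ ∈ ℝ with λ ≠ 0 and λ ≠ 1, and consider the circulation κ = (−1, λ, λ/(λ−1)) for n = 3 vortices. For w = x + iy ∈ ℂ with w ≠ 0 and w ≠ 1, the system (w, 1, 0) ∈ DV is self-similar if and only if either (x − (λ−1)/λ)² + y² = (λ² − λ + 1)/λ², or w = 1/λ. Thus the set of self-similar configurations is the union of the circle centered at ((λ−1)/λ, 0) of radius √((λ² − λ + 1)/λ²) and the single point (1/λ, 0). -/

import Mathlib

/-!
Since `a (z_j - z_k) / |z_j - z_k|² = a / conj (z_j - z_k)`, the field is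
`V_j = i Σ_k κ_k / conj (z_j - z_k)`. For `z = (w, 1, 0)` the only candidate is
`ω = V₁ - V₂`, so self-similarity is the single equation `V₀ - V₂ = (V₁ - V₂) w`. Clearing
denominators, with `u = conj w`, it becomes
`(λ u - 1) (λ |w|² - 2 (λ - 1) Re w - 1) = 0`, which factors in this way because
`κ₂ κ₃ = κ₂ + κ₃`. The first factor vanishes exactly at `w = 1/λ`, the second exactly
on the circle.
-/

/-- The point-vortex vector field `V` for circulation `κ`:
`V_j(z) = i · Σ_{k ≠ j} κ_k · (z_j − z_k) / |z_j − z_k|²`. -/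
noncomputable def vortexField {n : ℕ} (κ : Fin n → ℝ) (z : Fin n → ℂ) (j : Fin n) : ℂ :=
  Complex.I * ∑ k ∈ Finset.univ.erase j,
    (κ k : ℂ) * (z j - z k) / ((‖z j - z k‖ : ℝ) : ℂ) ^ 2

open ComplexConjugate

theorem Complex.mul_div_ofReal_norm_sq (a z : ℂ) : a * z / ((‖z‖ : ℝ) : ℂ) ^ 2 = a / conj z := by
  rcases eq_or_ne z 0 with rfl | hz
  · simp
  rw [← Complex.ofReal_pow, Complex.sq_norm, ← Complex.mul_conj, mul_comm a,
    mul_div_mul_left _ _ hz]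

/-- The `k = j` term vanishes because `a / 0 = 0`, so the sum may run over all of `Fin n`. -/
theorem vortexField_eq_sum_div_conj {n : ℕ} (κ : Fin n → ℝ) (z : Fin n → ℂ) (j : Fin n) :
    vortexField κ z j = Complex.I * ∑ k, (κ k : ℂ) / conj (z j - z k) := by
  simp only [vortexField, Complex.mul_div_ofReal_norm_sq]
  rw [Finset.sum_erase _ (by simp)]

theorem exists_sub_eq_mul_sub_iff {K ι : Type*} [Field K] {V z : ι → K} {a b : ι}
    (hab : z a ≠ z b) :
    (∃ ω, ∀ j k, V k - V j = ω * (z k - z j)) ↔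
      ∀ k, (V k - V a) * (z b - z a) = (V b - V a) * (z k - z a) := by
  have hba : z b - z a ≠ 0 := sub_ne_zero.mpr hab.symm
  constructor
  · rintro ⟨ω, hω⟩ k
    rw [hω, hω]
    ring
  · intro h
    have hω : ∀ k, V k - V a = (V b - V a) / (z b - z a) * (z k - z a) := fun k => by
      rw [div_mul_eq_mul_div, eq_div_iff hba, h]
    exact ⟨(V b - V a) / (z b - z a), fun j k => by linear_combination hω k - hω j⟩

theorem exists_sub_eq_mul_sub_cons_one_zero_iff {K : Type*} [Field K] (V : Fin 3 → K) (w : K) :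
    (∃ ω, ∀ j k, V k - V j = ω * ((![w, 1, 0] : Fin 3 → K) k - (![w, 1, 0] : Fin 3 → K) j)) ↔
      V 0 - V 2 = (V 1 - V 2) * w := by
  rw [exists_sub_eq_mul_sub_iff (a := 2) (b := 1) (by simp)]
  simp [Fin.forall_fin_succ]

theorem vortexField_cons_one_zero_sub_iff (κ : Fin 3 → ℝ) (w : ℂ) :
    vortexField κ ![w, 1, 0] 0 - vortexField κ ![w, 1, 0] 2 =
        (vortexField κ ![w, 1, 0] 1 - vortexField κ ![w, 1, 0] 2) * w ↔
      (κ 1 : ℂ) / (conj w - 1) + κ 2 / conj w + κ 0 / conj w + κ 1 =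
        (κ 0 / (1 - conj w) + κ 2 + κ 0 / conj w + κ 1) * w := by
  simp only [vortexField_eq_sum_div_conj, Fin.sum_univ_three]
  simp only [Matrix.cons_val_zero, Matrix.cons_val_one, Matrix.cons_val_two, Matrix.head_cons,
    Matrix.tail_cons, sub_self, map_zero, div_zero, map_sub, map_one, zero_sub, sub_zero, map_neg,
    div_neg, div_one, add_zero, zero_add]
  constructor
  · intro h
    exact mul_left_cancel₀ Complex.I_ne_zero (by linear_combination h)
  · intro h
    linear_combination Complex.I * h

theorem selfSimilar_equation_iff_mul_eq_zero {K : Type*} [Field K] {l u w : K} (hl : l ≠ 1)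
    (hu0 : u ≠ 0) (hu1 : u ≠ 1) :
    l / (u - 1) + l / (l - 1) / u + -1 / u + l = (-1 / (1 - u) + l / (l - 1) + -1 / u + l) * w ↔
      (l * u - 1) * (l * w * u - (l - 1) * (w + u) - 1) = 0 := by
  have hl' : l - 1 ≠ 0 := sub_ne_zero.mpr hl
  have hu1' : u - 1 ≠ 0 := sub_ne_zero.mpr hu1
  have hu1'' : 1 - u ≠ 0 := sub_ne_zero.mpr hu1.symm
  have key : (l / (u - 1) + l / (l - 1) / u + -1 / u + l -
      (-1 / (1 - u) + l / (l - 1) + -1 / u + l) * w) * (u * (u - 1) * (l - 1)) =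
      -((l * u - 1) * (l * w * u - (l - 1) * (w + u) - 1)) := by
    field_simp
    ring
  rw [← sub_eq_zero, ← neg_eq_zero (a := _ * _), ← key, mul_eq_zero,
    or_iff_left (mul_ne_zero (mul_ne_zero hu0 hu1') hl')]

theorem ofReal_mul_conj_sub_one_eq_zero_iff {l : ℝ} (hl : l ≠ 0) (w : ℂ) :
    (l : ℂ) * conj w - 1 = 0 ↔ w = 1 / (l : ℂ) := by
  have hl' : (l : ℂ) ≠ 0 := Complex.ofReal_ne_zero.mpr hl
  rw [sub_eq_zero, eq_div_iff hl', ← (starRingEnd ℂ).injective.eq_iff]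
  simp [mul_comm]

theorem circle_equation_iff {l : ℝ} (hl : l ≠ 0) (w : ℂ) :
    (l : ℂ) * w * conj w - (l - 1) * (w + conj w) - 1 = 0 ↔
      (w.re - (l - 1) / l) ^ 2 + w.im ^ 2 = (l ^ 2 - l + 1) / l ^ 2 := by
  rw [mul_assoc, Complex.mul_conj, Complex.add_conj, Complex.normSq_apply]
  norm_cast
  have key : (w.re - (l - 1) / l) ^ 2 + w.im ^ 2 - (l ^ 2 - l + 1) / l ^ 2 =
      (l * (w.re * w.re + w.im * w.im) - (l - 1) * (2 * w.re) - 1) / l := by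
    field_simp
    ring
  rw [← sub_eq_zero (a := _ + _), key, div_eq_zero_iff, or_iff_left hl]

/-- for the circulation `κ = (−1, λ, λ/(λ−1))` (`λ ≠ 0, 1`) of three
vortices and `w = x + iy` with `w ≠ 0, 1`, the system `(w, 1, 0)` is self-similar iff
`(x − (λ−1)/λ)² + y² = (λ² − λ + 1)/λ²` or `w = 1/λ`: the set of self-similar
configurations is the union of a circle and a single point. -/
theorem three_vortex_selfSimilar_set (lam : ℝ) (h0 : lam ≠ 0) (h1 : lam ≠ 1)
    (w : ℂ) (hw0 : w ≠ 0) (hw1 : w ≠ 1) :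
    (∃ ω : ℂ, ∀ j k : Fin 3,
        vortexField ![-1, lam, lam / (lam - 1)] ![w, 1, 0] k -
          vortexField ![-1, lam, lam / (lam - 1)] ![w, 1, 0] j =
        ω * ((![w, 1, 0] : Fin 3 → ℂ) k - (![w, 1, 0] : Fin 3 → ℂ) j)) ↔
    ((w.re - (lam - 1) / lam) ^ 2 + w.im ^ 2 = (lam ^ 2 - lam + 1) / lam ^ 2 ∨
      w = 1 / (lam : ℂ)) := by
  have hu0 : conj w ≠ 0 := (map_ne_zero _).mpr hw0
  have hu1 : conj w ≠ 1 := by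
    rwa [Ne, ← map_one (starRingEnd ℂ), (starRingEnd ℂ).injective.eq_iff]
  have hl1 : (lam : ℂ) ≠ 1 := by exact_mod_cast h1
  rw [exists_sub_eq_mul_sub_cons_one_zero_iff, vortexField_cons_one_zero_sub_iff]
  simp only [Matrix.cons_val_zero, Matrix.cons_val_one, Matrix.cons_val_two, Matrix.head_cons,
    Matrix.tail_cons]
  push_cast
  rw [selfSimilar_equation_iff_mul_eq_zero hl1 hu0 hu1, mul_eq_zero,
    ofReal_mul_conj_sub_one_eq_zero_iff h0, circle_equation_iff h0, or_comm]
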